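/- In the setting of the filtration lemma (Lemma 2.6): let m_N^I = dim_K (K[x_0,...,x_M]_{N−d‖I‖} / L_N^I) and for each I ∈ τ_N choose γ_{I,1},...,γ_{I,m_N^I} ∈ K[x_0,...,x_M]_{N−d‖I‖} whose classes form a basis of K[x_0,...,x_M]_{N−d‖I‖}/L_N^I. Then the classes of {Q_1^{i_1}···Q_n^{i_n}·γ_{I,ℓ} : I = (i_1,...,i_n) ∈ τ_N, 1 ≤ ℓ ≤ m_N^I} form a K-basis of K[x_0,...,x_M]_N / I_K(V)_N. In particular Σ_{I∈τ_N} m_N^I = dim_K K[x_0,...,x_M]_N / I_K(V)_N. -/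

import Mathlib

open MvPolynomial

/-- The index set `τ_N = {I ∈ ℕ^n : d‖I‖ ≤ N}` as a finset. -/
def tauFinset (d n N : ℕ) : Finset (Fin n → ℕ) :=
  (Fintype.piFinset fun _ : Fin n => Finset.range (N + 1)).filter
    (fun I => d * (∑ s, I s) ≤ N)

/-- The filtration space `L_N^I`. -/
def LSpace {K : Type*} [Field K] {M n : ℕ} (d N : ℕ)
    (Q : Fin n → MvPolynomial (Fin (M + 1)) K)
    (IK : Ideal (MvPolynomial (Fin (M + 1)) K)) (I : Fin n → ℕ) :
    Set (MvPolynomial (Fin (M + 1)) K) :=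
  {γ | γ.IsHomogeneous (N - d * ∑ s, I s) ∧
    ∃ (S : Finset (Fin n → ℕ)) (γE : (Fin n → ℕ) → MvPolynomial (Fin (M + 1)) K),
      (∀ E ∈ S, toLex I < toLex E ∧ d * ∑ s, E s ≤ N) ∧
      (∀ E ∈ S, (γE E).IsHomogeneous (N - d * ∑ s, E s)) ∧
      (∏ j, Q j ^ I j) * γ - ∑ E ∈ S, (∏ j, Q j ^ E j) * γE E ∈ IK}

/-!
The products `Q^I γ_{I,ℓ}` are triangular with respect to the lexicographic order on `τ_N`.
If a combination `∑ t_{I,ℓ} Q^I γ_{I,ℓ}` lies in `I_K(V)` and all coefficients with index below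
`I₀` vanish, the combination itself exhibits `∑ t_{I₀,ℓ} γ_{I₀,ℓ}` as an element of `L_N^{I₀}`,
forcing `t_{I₀} = 0`; induction along the well-founded lex order kills every coefficient.
Conversely, `Q^I g` is congruent modulo `I_K(V)` to `Q^I ∑ c_ℓ γ_{I,ℓ}` plus terms `Q^E γ_E` with
`E > I`, so descending induction on the finite set `τ_N` shows that the products span `K[x]_N`
modulo `I_K(V)_N`. The dimension count is then linear algebra inside the finite-dimensional
space `K[x]_N`.
-/

section SpanOfFamily

variable {K E α : Type*} [Field K] [AddCommGroup E] [Module K E] {s : Finset α} {κ : α → Type*}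

theorem Finset.exists_eq_sigma_coe_sort {β : Type*} [Zero β] (c : (Σ a : s, κ a) → β) :
    ∃ t : (a : α) → κ a → β, c = fun p => t p.1 p.2 := by
  classical
  exact ⟨fun a b => if h : a ∈ s then c ⟨⟨a, h⟩, b⟩ else 0, funext fun p => by simp⟩

variable [∀ a, Fintype (κ a)]

theorem Finset.sum_sigma_coe_sort {β : Type*} [AddCommMonoid β] (f : (a : α) → κ a → β) :
    ∑ p : Σ a : s, κ a, f p.1 p.2 = ∑ a ∈ s, ∑ b, f a b := by
  rw [Fintype.sum_sigma]
  exact Finset.sum_coe_sort s fun a => ∑ b, f a b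

theorem Submodule.mem_span_range_sigma_iff {v : (a : α) → κ a → E} {x : E} :
    x ∈ Submodule.span K (Set.range fun p : Σ a : s, κ a => v p.1 p.2) ↔
      ∃ t : (a : α) → κ a → K, ∑ a ∈ s, ∑ b, t a b • v a b = x := by
  rw [Submodule.mem_span_range_iff_exists_fun]
  constructor
  · rintro ⟨c, rfl⟩
    obtain ⟨t, rfl⟩ := Finset.exists_eq_sigma_coe_sort c
    exact ⟨t, (Finset.sum_sigma_coe_sort fun a b => t a b • v a b).symm⟩
  · rintro ⟨t, rfl⟩
    exact ⟨fun p => t p.1 p.2, Finset.sum_sigma_coe_sort fun a b => t a b • v a b⟩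

theorem Submodule.mem_span_range_sigma_sup_iff {v : (a : α) → κ a → E} {W : Submodule K E}
    {x : E} :
    x ∈ Submodule.span K (Set.range fun p : Σ a : s, κ a => v p.1 p.2) ⊔ W ↔
      ∃ t : (a : α) → κ a → K, x - ∑ a ∈ s, ∑ b, t a b • v a b ∈ W := by
  simp only [Submodule.mem_sup, Submodule.mem_span_range_sigma_iff]
  constructor
  · rintro ⟨_, ⟨t, rfl⟩, z, hz, rfl⟩
    exact ⟨t, by simpa using hz⟩
  · rintro ⟨t, ht⟩
    exact ⟨_, ⟨t, rfl⟩, _, ht, add_sub_cancel _ _⟩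

theorem card_add_finrank_inf_eq_finrank {ι : Type*} [Fintype ι] {V W : Submodule K E}
    [FiniteDimensional K V] {u : ι → E} (hu : ∀ i, u i ∈ V)
    (hindep : ∀ c : ι → K, ∑ i, c i • u i ∈ W → c = 0)
    (hspan : V ≤ Submodule.span K (Set.range u) ⊔ W) :
    Fintype.card ι + Module.finrank K ↥(W ⊓ V) = Module.finrank K V := by
  set S := Submodule.span K (Set.range u)
  have hSV : S ≤ V := Submodule.span_le.2 (Set.range_subset_iff.2 hu)
  have hli : LinearIndependent K u := Fintype.linearIndependent_iff.2 fun c hc =>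
    congrFun (hindep c (hc ▸ W.zero_mem))
  have hinf : S ⊓ (W ⊓ V) = ⊥ := by
    refine eq_bot_iff.2 fun x ⟨hxS, hxW, _⟩ => ?_
    obtain ⟨c, rfl⟩ := (Submodule.mem_span_range_iff_exists_fun K).1 hxS
    simp [hindep c hxW]
  have hsup : S ⊔ (W ⊓ V) = V := by
    refine le_antisymm (sup_le hSV inf_le_right) fun x hx => ?_
    obtain ⟨y, hy, z, hz, rfl⟩ := Submodule.mem_sup.1 (hspan hx)
    have hzV : z ∈ V := by simpa using V.sub_mem hx (hSV hy)
    exact Submodule.add_mem_sup hy ⟨hz, hzV⟩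
  have : FiniteDimensional K ↥(W ⊓ V) := Submodule.finiteDimensional_of_le inf_le_right
  have : FiniteDimensional K S := FiniteDimensional.span_of_finite K (Set.finite_range u)
  have := Submodule.finrank_sup_add_finrank_inf_eq S (W ⊓ V)
  rw [hsup, hinf, finrank_bot, finrank_span_eq_card hli] at this
  omega

theorem sum_card_add_finrank_inf_eq_finrank {V W : Submodule K E} [FiniteDimensional K V]
    {v : (a : α) → κ a → E} (hv : ∀ a ∈ s, ∀ b, v a b ∈ V)
    (hindep : ∀ t : (a : α) → κ a → K,
      ∑ a ∈ s, ∑ b, t a b • v a b ∈ W → ∀ a ∈ s, ∀ b, t a b = 0)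
    (hspan : ∀ x ∈ V, ∃ t : (a : α) → κ a → K, x - ∑ a ∈ s, ∑ b, t a b • v a b ∈ W) :
    ∑ a ∈ s, Fintype.card (κ a) + Module.finrank K ↥(W ⊓ V) = Module.finrank K V := by
  rw [← Finset.sum_coe_sort s, ← Fintype.card_sigma]
  refine card_add_finrank_inf_eq_finrank (u := fun p : Σ a : s, κ a => v p.1 p.2)
    (fun p => hv _ p.1.2 _) (fun c hc => ?_)
    fun x hx => Submodule.mem_span_range_sigma_sup_iff.2 (hspan x hx)
  obtain ⟨t, rfl⟩ := Finset.exists_eq_sigma_coe_sort c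
  rw [Finset.sum_sigma_coe_sort fun a b => t a b • v a b] at hc
  exact funext fun p => hindep t hc _ p.1.2 _

end SpanOfFamily

open Finset in
open scoped Classical in
theorem Finset.card_filter_lt_lt_of_lt {α β : Type*} [Preorder β] (f : α → β) {s : Finset α}
    {a b : α} (hb : b ∈ s) (hab : f a < f b) :
    #{x ∈ s | f b < f x} < #{x ∈ s | f a < f x} := by
  refine Finset.card_lt_card ((Finset.ssubset_iff_of_subset ?_).2 ⟨b, ?_, ?_⟩)
  · intro x
    simp only [Finset.mem_filter]
    exact fun ⟨hx, hbx⟩ => ⟨hx, hab.trans hbx⟩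
  · simpa [hb] using hab
  · simp

section Filtration

variable {K : Type*} [Field K] {M n d N : ℕ} {Q : Fin n → MvPolynomial (Fin (M + 1)) K}
  {IK : Ideal (MvPolynomial (Fin (M + 1)) K)} {m : (Fin n → ℕ) → ℕ}
  {γ : (I : Fin n → ℕ) → Fin (m I) → MvPolynomial (Fin (M + 1)) K}

theorem le_of_mem_tauFinset {I : Fin n → ℕ} (hI : I ∈ tauFinset d n N) : d * ∑ s, I s ≤ N :=
  (Finset.mem_filter.1 hI).2

theorem mem_tauFinset_of_le (hd : 1 ≤ d) {I : Fin n → ℕ} (h : d * ∑ s, I s ≤ N) :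
    I ∈ tauFinset d n N := by
  refine Finset.mem_filter.2 ⟨?_, h⟩
  refine Fintype.mem_piFinset.2 fun s => Finset.mem_range.2 (Nat.lt_succ_of_le ?_)
  calc I s ≤ ∑ s, I s := Finset.single_le_sum (fun _ _ => Nat.zero_le _) (Finset.mem_univ s)
    _ ≤ d * ∑ s, I s := Nat.le_mul_of_pos_left _ hd
    _ ≤ N := h

theorem isHomogeneous_prod_pow (hQ : ∀ j, (Q j).IsHomogeneous d) (I : Fin n → ℕ) :
    (∏ j, Q j ^ I j).IsHomogeneous (d * ∑ s, I s) := by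
  rw [Finset.mul_sum]
  exact IsHomogeneous.prod _ _ _ fun j _ => (hQ j).pow (I j)

theorem sum_C_mul_mem_LSpace_of_sum_mem {t : (I : Fin n → ℕ) → Fin (m I) → K}
    {I : Fin n → ℕ} (hI : I ∈ tauFinset d n N)
    (hγ : ∀ J ∈ tauFinset d n N, ∀ ℓ, (γ J ℓ).IsHomogeneous (N - d * ∑ s, J s))
    (hlt : ∀ J ∈ tauFinset d n N, toLex J < toLex I → t J = 0)
    (ht : ∑ J ∈ tauFinset d n N, ∑ ℓ, C (t J ℓ) * ((∏ j, Q j ^ J j) * γ J ℓ) ∈ IK) :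
    ∑ ℓ, C (t I ℓ) * γ I ℓ ∈ LSpace d N Q IK I := by
  classical
  set g : (Fin n → ℕ) → MvPolynomial (Fin (M + 1)) K := fun J => ∑ ℓ, C (t J ℓ) * γ J ℓ
  have hg : ∀ J ∈ tauFinset d n N, (g J).IsHomogeneous (N - d * ∑ s, J s) := fun J hJ =>
    IsHomogeneous.sum _ _ _ fun ℓ _ => (hγ J hJ ℓ).C_mul _
  have hsplit : ∑ J ∈ tauFinset d n N, ∑ ℓ, C (t J ℓ) * ((∏ j, Q j ^ J j) * γ J ℓ) =
      ∑ E ∈ tauFinset d n N with toLex I < toLex E, (∏ j, Q j ^ E j) * g E +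
        (∏ j, Q j ^ I j) * g I := by
    simp only [g, Finset.mul_sum, mul_left_comm _ (C _)]
    rw [← Finset.sum_filter_add_sum_filter_not _ fun E => toLex I < toLex E]
    congr 1
    refine Finset.sum_eq_single_of_mem I (Finset.mem_filter.2 ⟨hI, lt_irrefl _⟩)
      fun J hJ hJI => ?_
    rw [Finset.mem_filter] at hJ
    simp [hlt J hJ.1 ((not_lt.1 hJ.2).lt_of_ne (toLex.injective.ne hJI))]
  refine ⟨hg I hI, {E ∈ tauFinset d n N | toLex I < toLex E}, fun E => -g E, fun E hE => ?_,
    fun E hE => (hg E (Finset.mem_filter.1 hE).1).neg, ?_⟩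
  · rw [Finset.mem_filter] at hE
    exact ⟨hE.2, le_of_mem_tauFinset hE.1⟩
  · simpa [hsplit, add_comm] using ht

theorem eq_zero_of_sum_C_mul_mem
    (hγ : ∀ J ∈ tauFinset d n N, ∀ ℓ, (γ J ℓ).IsHomogeneous (N - d * ∑ s, J s))
    (hindep : ∀ I ∈ tauFinset d n N, ∀ c : Fin (m I) → K,
      ∑ ℓ, C (c ℓ) * γ I ℓ ∈ LSpace d N Q IK I → c = 0)
    {t : (I : Fin n → ℕ) → Fin (m I) → K}
    (ht : ∑ J ∈ tauFinset d n N, ∑ ℓ, C (t J ℓ) * ((∏ j, Q j ^ J j) * γ J ℓ) ∈ IK)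
    {I : Fin n → ℕ} (hI : I ∈ tauFinset d n N) : t I = 0 := by
  suffices ∀ J : Lex (Fin n → ℕ), ofLex J ∈ tauFinset d n N → t (ofLex J) = 0 from
    this (toLex I) hI
  intro J
  induction J using WellFoundedLT.induction with
  | ind J ih =>
    exact fun hJ => hindep _ hJ _
      (sum_C_mul_mem_LSpace_of_sum_mem hJ hγ (fun E hE hEJ => ih (toLex E) hEJ hE) ht)

open Finset in
open scoped Classical in
theorem prod_pow_mul_mem_span_sup (hd : 1 ≤ d)
    (hspan : ∀ I ∈ tauFinset d n N, ∀ f : MvPolynomial (Fin (M + 1)) K,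
      f.IsHomogeneous (N - d * ∑ s, I s) →
      ∃ c : Fin (m I) → K, f - ∑ ℓ, C (c ℓ) * γ I ℓ ∈ LSpace d N Q IK I)
    {I : Fin n → ℕ} (hI : I ∈ tauFinset d n N) {g : MvPolynomial (Fin (M + 1)) K}
    (hg : g.IsHomogeneous (N - d * ∑ s, I s)) :
    (∏ j, Q j ^ I j) * g ∈
      Submodule.span K (Set.range fun p : Σ J : tauFinset d n N, Fin (m J) =>
        (∏ j, Q j ^ (p.1 : Fin n → ℕ) j) * γ p.1 p.2) ⊔ IK.restrictScalars K := by
  set Sp := Submodule.span K (Set.range fun p : Σ J : tauFinset d n N, Fin (m J) =>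
    (∏ j, Q j ^ (p.1 : Fin n → ℕ) j) * γ p.1 p.2)
  obtain ⟨c, -, S, γE, hS, hγE, hmem⟩ := hspan I hI g hg
  have hhead : (∏ j, Q j ^ I j) * ∑ ℓ, C (c ℓ) * γ I ℓ ∈ Sp := by
    rw [Finset.mul_sum]
    refine Submodule.sum_mem _ fun ℓ _ => ?_
    rw [mul_left_comm, ← smul_eq_C_mul]
    exact Submodule.smul_mem _ _ (Submodule.subset_span ⟨⟨⟨I, hI⟩, ℓ⟩, rfl⟩)
  have htail : ∀ E ∈ S, (∏ j, Q j ^ E j) * γE E ∈ Sp ⊔ IK.restrictScalars K := fun E hE =>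
    prod_pow_mul_mem_span_sup hd hspan (mem_tauFinset_of_le hd (hS E hE).2) (hγE E hE)
  have hdecomp : (∏ j, Q j ^ I j) * g =
      ((∏ j, Q j ^ I j) * (g - ∑ ℓ, C (c ℓ) * γ I ℓ) - ∑ E ∈ S, (∏ j, Q j ^ E j) * γE E) +
        ∑ E ∈ S, (∏ j, Q j ^ E j) * γE E + (∏ j, Q j ^ I j) * ∑ ℓ, C (c ℓ) * γ I ℓ := by
    ring
  rw [hdecomp]
  exact add_mem (add_mem (Submodule.mem_sup_right hmem) (Submodule.sum_mem _ htail))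
    (Submodule.mem_sup_left hhead)
termination_by #{E ∈ tauFinset d n N | toLex I < toLex E}
decreasing_by
  exact Finset.card_filter_lt_lt_of_lt toLex (mem_tauFinset_of_le hd (hS E hE).2) (hS E hE).1

end Filtration

theorem filtration_basis_general (K : Type*) [Field K] (M n d N : ℕ)
    (hd : 1 ≤ d)
    (IK : Ideal (MvPolynomial (Fin (M + 1)) K))
    (Q : Fin n → MvPolynomial (Fin (M + 1)) K) (hQ : ∀ j, (Q j).IsHomogeneous d)
    (m : (Fin n → ℕ) → ℕ)
    (γ : (I : Fin n → ℕ) → Fin (m I) → MvPolynomial (Fin (M + 1)) K)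
    (hγhom : ∀ I ∈ tauFinset d n N, ∀ ℓ, (γ I ℓ).IsHomogeneous (N - d * ∑ s, I s))
    (hspan : ∀ I ∈ tauFinset d n N, ∀ f : MvPolynomial (Fin (M + 1)) K,
      f.IsHomogeneous (N - d * ∑ s, I s) →
      ∃ c : Fin (m I) → K, f - ∑ ℓ, C (c ℓ) * γ I ℓ ∈ LSpace d N Q IK I)
    (hindep : ∀ I ∈ tauFinset d n N, ∀ c : Fin (m I) → K,
      (∑ ℓ, C (c ℓ) * γ I ℓ) ∈ LSpace d N Q IK I → c = 0) :
    (∀ t : (I : Fin n → ℕ) → Fin (m I) → K,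
      (∑ I ∈ tauFinset d n N, ∑ ℓ, C (t I ℓ) * ((∏ j, Q j ^ I j) * γ I ℓ)) ∈ IK →
      ∀ I ∈ tauFinset d n N, ∀ ℓ, t I ℓ = 0) ∧
    (∀ f : MvPolynomial (Fin (M + 1)) K, f.IsHomogeneous N →
      ∃ t : (I : Fin n → ℕ) → Fin (m I) → K,
        f - ∑ I ∈ tauFinset d n N, ∑ ℓ, C (t I ℓ) * ((∏ j, Q j ^ I j) * γ I ℓ) ∈ IK) ∧
    ((∑ I ∈ tauFinset d n N, m I) +
        Module.finrank K ↥((Submodule.restrictScalars K IK) ⊓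
          homogeneousSubmodule (Fin (M + 1)) K N)
      = Module.finrank K ↥(homogeneousSubmodule (Fin (M + 1)) K N)) := by
  have hlinIndep : ∀ t : (I : Fin n → ℕ) → Fin (m I) → K,
      ∑ I ∈ tauFinset d n N, ∑ ℓ, C (t I ℓ) * ((∏ j, Q j ^ I j) * γ I ℓ) ∈ IK →
      ∀ I ∈ tauFinset d n N, ∀ ℓ, t I ℓ = 0 := fun t ht I hI =>
    congrFun (eq_zero_of_sum_C_mul_mem hγhom hindep ht hI)
  have hgen : ∀ f : MvPolynomial (Fin (M + 1)) K, f.IsHomogeneous N →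
      ∃ t : (I : Fin n → ℕ) → Fin (m I) → K,
        f - ∑ I ∈ tauFinset d n N, ∑ ℓ, C (t I ℓ) * ((∏ j, Q j ^ I j) * γ I ℓ) ∈ IK := by
    intro f hf
    have h0 := prod_pow_mul_mem_span_sup hd hspan (mem_tauFinset_of_le hd (by simp))
      (I := 0) (g := f) (by simpa using hf)
    simp only [Pi.zero_apply, pow_zero, Finset.prod_const_one, one_mul] at h0
    simpa only [smul_eq_C_mul, Submodule.restrictScalars_mem] using
      (Submodule.mem_span_range_sigma_sup_iff (v := fun I ℓ => (∏ j, Q j ^ I j) * γ I ℓ)).1 h0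
  have hV : ∀ I ∈ tauFinset d n N, ∀ ℓ,
      (∏ j, Q j ^ I j) * γ I ℓ ∈ homogeneousSubmodule (Fin (M + 1)) K N := fun I hI ℓ => by
    have := (isHomogeneous_prod_pow hQ I).mul (hγhom I hI ℓ)
    rwa [Nat.add_sub_cancel' (le_of_mem_tauFinset hI)] at this
  have : FiniteDimensional K (homogeneousSubmodule (Fin (M + 1)) K N) :=
    Module.Finite.iff_fg.2 (homogeneousSubmodule_fg _ _ _)
  refine ⟨hlinIndep, hgen, ?_⟩
  simpa using sum_card_add_finrank_inf_eq_finrank hV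
    (by simpa only [smul_eq_C_mul, Submodule.restrictScalars_mem] using hlinIndep)
    (by simpa only [smul_eq_C_mul, Submodule.restrictScalars_mem, mem_homogeneousSubmodule]
      using hgen)

/-- Lemma 2.6: if for each `I ∈ τ_N` the classes of `γ_{I,1},…,γ_{I,m_N^I}` form a basis of
`K[x]_{N−d‖I‖}/L_N^I`, then the classes of the products `Q_1^{i_1}⋯Q_n^{i_n}·γ_{I,ℓ}` form a
`K`-basis of `K[x]_N / I_K(V)_N`; in particular `Σ_{I∈τ_N} m_N^I = dim_K K[x]_N/I_K(V)_N`. -/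
theorem filtration_basis (K : Type*) [Field K] [Algebra ℂ K] (M n d N : ℕ)
    (hd : 1 ≤ d) (hn : 1 ≤ n)
    (IV : Ideal (MvPolynomial (Fin (M + 1)) ℂ))
    (hhom : ∀ p ∈ IV, ∀ k : ℕ, homogeneousComponent k p ∈ IV)
    (IK : Ideal (MvPolynomial (Fin (M + 1)) K))
    (hIK : IK = Ideal.map (MvPolynomial.map (algebraMap ℂ K)) IV)
    (Q : Fin n → MvPolynomial (Fin (M + 1)) K) (hQ : ∀ j, (Q j).IsHomogeneous d)
    (m : (Fin n → ℕ) → ℕ)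
    (γ : (I : Fin n → ℕ) → Fin (m I) → MvPolynomial (Fin (M + 1)) K)
    (hγhom : ∀ I ∈ tauFinset d n N, ∀ ℓ, (γ I ℓ).IsHomogeneous (N - d * ∑ s, I s))
    (hspan : ∀ I ∈ tauFinset d n N, ∀ f : MvPolynomial (Fin (M + 1)) K,
      f.IsHomogeneous (N - d * ∑ s, I s) →
      ∃ c : Fin (m I) → K, f - ∑ ℓ, C (c ℓ) * γ I ℓ ∈ LSpace d N Q IK I)
    (hindep : ∀ I ∈ tauFinset d n N, ∀ c : Fin (m I) → K,
      (∑ ℓ, C (c ℓ) * γ I ℓ) ∈ LSpace d N Q IK I → c = 0) :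
    (∀ t : (I : Fin n → ℕ) → Fin (m I) → K,
      (∑ I ∈ tauFinset d n N, ∑ ℓ, C (t I ℓ) * ((∏ j, Q j ^ I j) * γ I ℓ)) ∈ IK →
      ∀ I ∈ tauFinset d n N, ∀ ℓ, t I ℓ = 0) ∧
    (∀ f : MvPolynomial (Fin (M + 1)) K, f.IsHomogeneous N →
      ∃ t : (I : Fin n → ℕ) → Fin (m I) → K,
        f - ∑ I ∈ tauFinset d n N, ∑ ℓ, C (t I ℓ) * ((∏ j, Q j ^ I j) * γ I ℓ) ∈ IK) ∧
    ((∑ I ∈ tauFinset d n N, m I) +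
        Module.finrank K ↥((Submodule.restrictScalars K IK) ⊓
          homogeneousSubmodule (Fin (M + 1)) K N)
      = Module.finrank K ↥(homogeneousSubmodule (Fin (M + 1)) K N)) :=
  filtration_basis_general K M n d N hd IK Q hQ m γ hγhom hspan hindep
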